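/- arXiv:2512.00848 — 4 statements merged into one kernel-verified Lean document; each statement's English description precedes it below -/
import Mathlib

section
/- For every a < s₁ < s₂ < b, the evolute satisfies the integral identity γ̃(s₂) − γ̃(s₁) = ∫_{s₁}^{s₂} ((R(s) − R(s₂))/R(s)) · γ'(s) ds + (R(s₂) − R(s₁)) · ν(s₁). -/
/-!
Along a unit-speed curve `γ'' ⟂ γ'`, so `γ'' = κ ν`, and rotating gives the Frenet equation
`ν' = -κ γ'`. Hence for the constant `c = R(s₂)` the curve `F = γ + c ν` has velocity
`(1 - c κ) γ' = ((R - R(s₂)) / R) γ'`, and the identity is the fundamental theorem of calculus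
for `F` on `[s₁, s₂]`, plus the bookkeeping `ev = F + (R - R(s₂)) ν`.
-/

open Set Real Topology Filter
open scoped NNReal

noncomputable section

/-- The Euclidean plane. -/
abbrev Plane := EuclideanSpace ℝ (Fin 2)

/-- Rotation of a plane vector by `+π/2`. -/
def Jrot (v : Plane) : Plane := WithLp.toLp 2 ![-(v 1), v 0]

local notation "⟪" x ", " y "⟫" => @inner ℝ _ _ x y

lemma HasDerivAt.inner_eq_zero_of_eventually_norm_eq {E : Type*} [NormedAddCommGroup E]
    [InnerProductSpace ℝ E] {f : ℝ → E} {f' : E} {s c : ℝ} (hf : HasDerivAt f f' s)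
    (hc : ∀ᶠ t in 𝓝 s, ‖f t‖ = c) : ⟪f s, f'⟫ = 0 := by
  have hconst : HasDerivAt (‖f ·‖ ^ 2) 0 s :=
    (hasDerivAt_const s (c ^ 2)).congr_of_eventuallyEq (hc.mono fun t ht => by simp [ht])
  have := hf.norm_sq.unique hconst
  linarith

def JrotCLM : Plane →L[ℝ] Plane :=
  LinearMap.toContinuousLinearMap
    { toFun := Jrot
      map_add' := fun x y => by ext i; fin_cases i <;> simp [Jrot, add_comm]
      map_smul' := fun c x => by ext i; fin_cases i <;> simp [Jrot] }

lemma JrotCLM_apply (v : Plane) : JrotCLM v = Jrot v := rfl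

lemma Jrot_Jrot (v : Plane) : Jrot (Jrot v) = -v := by
  ext i; fin_cases i <;> simp [Jrot]

lemma eq_inner_Jrot_smul_Jrot {v w : Plane} (hv : ‖v‖ = 1) (hvw : ⟪v, w⟫ = 0) :
    w = ⟪w, Jrot v⟫ • Jrot v := by
  have hv2 : ⟪v, v⟫ = 1 := by rw [real_inner_self_eq_norm_mul_norm, hv, one_mul]
  have hJ : ⟪w, Jrot v⟫ = w 1 * v 0 - w 0 * v 1 := by
    simp only [Jrot, PiLp.inner_apply, RCLike.inner_apply, conj_trivial, Fin.sum_univ_two,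
      Matrix.cons_val_zero, Matrix.cons_val_one, Matrix.cons_val_fin_one]
    ring
  simp only [PiLp.inner_apply, Fin.sum_univ_two, RCLike.inner_apply, conj_trivial] at hv2 hvw
  rw [hJ]
  ext i; fin_cases i <;>
    simp only [Fin.zero_eta, Fin.mk_one, Fin.isValue, Jrot, PiLp.smul_apply, smul_eq_mul,
      Matrix.cons_val_zero, Matrix.cons_val_one, Matrix.cons_val_fin_one]
  · linear_combination v 0 * hvw - w 0 * hv2
  · linear_combination v 1 * hvw - w 1 * hv2

def signedCurvature (γ : ℝ → Plane) (s : ℝ) : ℝ := ⟪deriv (deriv γ) s, Jrot (deriv γ s)⟫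

section ContDiffOn

variable {E : Type*} [NormedAddCommGroup E] [NormedSpace ℝ E] {f : ℝ → E} {U : Set ℝ} {s : ℝ}

lemma ContDiffOn.hasDerivAt (hU : IsOpen U) (hf : ContDiffOn ℝ 1 f U) (hs : s ∈ U) :
    HasDerivAt f (deriv f s) s :=
  ((hf.differentiableOn one_ne_zero).differentiableAt (hU.mem_nhds hs)).hasDerivAt

lemma ContDiffOn.hasDerivAt_deriv (hU : IsOpen U) (hf : ContDiffOn ℝ 2 f U) (hs : s ∈ U) :
    HasDerivAt (deriv f) (deriv (deriv f) s) s :=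
  (hf.deriv_of_isOpen hU (by norm_num)).hasDerivAt hU hs

end ContDiffOn

section UnitSpeed

variable {γ : ℝ → Plane} {U : Set ℝ} {s : ℝ}

lemma ContDiffOn.continuousOn_signedCurvature (hU : IsOpen U) (hγ : ContDiffOn ℝ 2 γ U) :
    ContinuousOn (signedCurvature γ) U := by
  have hγ' : ContDiffOn ℝ 1 (deriv γ) U := hγ.deriv_of_isOpen hU (by norm_num)
  exact (hγ'.continuousOn_deriv_of_isOpen hU le_rfl).inner
    (JrotCLM.continuous.comp_continuousOn hγ'.continuousOn)

lemma deriv_deriv_eq_signedCurvature_smul (hU : IsOpen U) (hγ : ContDiffOn ℝ 2 γ U)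
    (harc : ∀ t ∈ U, ‖deriv γ t‖ = 1) (hs : s ∈ U) :
    deriv (deriv γ) s = signedCurvature γ s • Jrot (deriv γ s) :=
  eq_inner_Jrot_smul_Jrot (harc s hs) <|
    (hγ.hasDerivAt_deriv hU hs).inner_eq_zero_of_eventually_norm_eq
      (eventually_of_mem (hU.mem_nhds hs) harc)

lemma hasDerivAt_Jrot_deriv (hU : IsOpen U) (hγ : ContDiffOn ℝ 2 γ U)
    (harc : ∀ t ∈ U, ‖deriv γ t‖ = 1) (hs : s ∈ U) :
    HasDerivAt (fun t => Jrot (deriv γ t)) (-signedCurvature γ s • deriv γ s) s := by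
  refine (JrotCLM.hasFDerivAt.comp_hasDerivAt s (hγ.hasDerivAt_deriv hU hs)).congr_deriv ?_
  rw [deriv_deriv_eq_signedCurvature_smul hU hγ harc hs, map_smul, JrotCLM_apply, Jrot_Jrot,
    smul_neg, neg_smul]

lemma hasDerivAt_add_smul_Jrot_deriv (hU : IsOpen U) (hγ : ContDiffOn ℝ 2 γ U)
    (harc : ∀ t ∈ U, ‖deriv γ t‖ = 1) (c : ℝ) (hs : s ∈ U) :
    HasDerivAt (fun t => γ t + c • Jrot (deriv γ t))
      ((1 - c * signedCurvature γ s) • deriv γ s) s :=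
  ((hγ.of_le (by norm_num)).hasDerivAt hU hs |>.add
    ((hasDerivAt_Jrot_deriv hU hγ harc hs).const_smul c)).congr_deriv (by module)

end UnitSpeed

theorem evolute_integral_identity_general
    (a b : ℝ) (γ ν ev : ℝ → Plane) (κ R : ℝ → ℝ)
    (hγ : ContDiffOn ℝ 2 γ (Ioo a b))
    (harc : ∀ s ∈ Ioo a b, ‖deriv γ s‖ = 1)
    (hν : ∀ s, ν s = Jrot (deriv γ s))
    (hκdef : ∀ s, κ s = ⟪deriv (deriv γ) s, ν s⟫)
    (hκ : ∀ s ∈ Ioo a b, κ s ≠ 0)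
    (hR : ∀ s, R s = (κ s)⁻¹)
    (hev : ∀ s, ev s = γ s + R s • ν s)
    (s₁ s₂ : ℝ) (h1 : a < s₁) (h12 : s₁ < s₂) (h2 : s₂ < b) :
    ev s₂ - ev s₁ =
      (∫ s in s₁..s₂, ((R s - R s₂) / R s) • deriv γ s) + (R s₂ - R s₁) • ν s₁ := by
  have hκγ : κ = signedCurvature γ := funext fun s => by rw [hκdef, hν, signedCurvature]
  have hsub : uIcc s₁ s₂ ⊆ Ioo a b := by
    rw [uIcc_of_le h12.le]
    exact Icc_subset_Ioo h1 h2
  have hintegrand : EqOn (fun s => ((R s - R s₂) / R s) • deriv γ s)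
      (fun s => (1 - R s₂ * κ s) • deriv γ s) (uIcc s₁ s₂) := fun s hs => by
    have := hκ s (hsub hs)
    simp only [hR]
    field_simp
  have hcont : ContinuousOn (fun s => (1 - R s₂ * κ s) • deriv γ s) (uIcc s₁ s₂) := by
    rw [hκγ]
    exact ((continuousOn_const.sub (continuousOn_const.mul
      (hγ.continuousOn_signedCurvature isOpen_Ioo))).smul
      (hγ.continuousOn_deriv_of_isOpen isOpen_Ioo (by norm_num))).mono hsub
  have hFTC := intervalIntegral.integral_eq_sub_of_hasDerivAt
    (fun s hs => hκγ ▸ hasDerivAt_add_smul_Jrot_deriv isOpen_Ioo hγ harc (R s₂) (hsub hs))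
    hcont.intervalIntegrable
  rw [intervalIntegral.integral_congr hintegrand, hFTC, hev, hev, hν, hν]
  module

/-- the integral identity for increments of the evolute. -/
theorem evolute_integral_identity
    (a b : ℝ) (hab : a < b) (γ ν ev : ℝ → Plane) (κ R : ℝ → ℝ)
    (hγ : ContDiffOn ℝ 2 γ (Ioo a b))
    (harc : ∀ s ∈ Ioo a b, ‖deriv γ s‖ = 1)
    (hν : ∀ s, ν s = Jrot (deriv γ s))
    (hκdef : ∀ s, κ s = ⟪deriv (deriv γ) s, ν s⟫)
    (hκ : ∀ s ∈ Ioo a b, κ s ≠ 0)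
    (hR : ∀ s, R s = (κ s)⁻¹)
    (hev : ∀ s, ev s = γ s + R s • ν s)
    (s₁ s₂ : ℝ) (h1 : a < s₁) (h12 : s₁ < s₂) (h2 : s₂ < b) :
    ev s₂ - ev s₁ =
      (∫ s in s₁..s₂, ((R s - R s₂) / R s) • deriv γ s) + (R s₂ - R s₁) • ν s₁ :=
  evolute_integral_identity_general a b γ ν ev κ R hγ harc hν hκdef hκ hR hev s₁ s₂ h1 h12 h2
end
end

section
/- Suppose the signed radius of curvature R is strictly increasing on (a,b). Then for all a < s₁ < s₂ < b one has |γ̃(s₂) − γ̃(s₁) − (R(s₂) − R(s₁)) ν(s₁)| ≤ |s₂ − s₁| · |R(s₂) − R(s₁)| / min_{s ∈ [s₁,s₂]} |R(s)|; in particular (γ̃(s₂) − γ̃(s₁)) / (R(s₂) − R(s₁)) = ν(s₁) + O(|s₂ − s₁|) as s₂ → s₁. -/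
/-!
By the Frenet equation `ν' = -κ γ'`, the curve `s ↦ γ(s) + R(s₂) ν(s)` has velocity
`(1 - R(s₂)/R(s)) γ'(s)`, of length `|R(s) - R(s₂)| / |R(s)| ≤ |R(s₂) - R(s₁)| / min |R|` on
`[s₁, s₂]` because `R` is monotone; no derivative of `R` is needed. Its increment from `s₁` to `s₂`
is exactly `ev(s₂) - ev(s₁) - (R(s₂) - R(s₁)) ν(s₁)`, so the mean value inequality gives the
estimate. Near `s₁` the minimum of `|R|` stays above `|R(s₁)| / 2`, and dividing by
`R(s₂) - R(s₁) ≠ 0` gives the asymptotic form.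
-/

open Set Real Topology Filter
open scoped NNReal

noncomputable section

local notation "⟪" x ", " y "⟫" => @inner ℝ _ _ x y

def jrotCLM : Plane →L[ℝ] Plane :=
  LinearMap.toContinuousLinearMap
  { toFun := Jrot
    map_add' := fun x y => by ext i; fin_cases i <;> simp [Jrot]; ring
    map_smul' := fun c x => by ext i; fin_cases i <;> simp [Jrot] }

@[simp]
lemma jrotCLM_apply (v : Plane) : jrotCLM v = Jrot v := rfl

lemma plane_inner_eq (x y : Plane) : ⟪x, y⟫ = x 0 * y 0 + x 1 * y 1 := by
  simp [PiLp.inner_apply, Fin.sum_univ_two]; ring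

lemma inner_smul_add_inner_Jrot_smul {t : Plane} (ht : ‖t‖ = 1) (w : Plane) :
    ⟪w, t⟫ • t + ⟪w, Jrot t⟫ • Jrot t = w := by
  have hunit : t 0 ^ 2 + t 1 ^ 2 = 1 := by
    have := real_inner_self_eq_norm_sq t
    rw [plane_inner_eq, ht] at this
    linarith
  ext i
  fin_cases i
  · simp [plane_inner_eq, Jrot]; linear_combination (w 0) * hunit
  · simp [plane_inner_eq, Jrot]; linear_combination (w 1) * hunit

lemma HasDerivAt.inner_eq_zero_of_norm_eventually_eq_one {E : Type*} [NormedAddCommGroup E]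
    [InnerProductSpace ℝ E] {f : ℝ → E} {f' : E} {x : ℝ} (hf : HasDerivAt f f' x)
    (hnorm : ∀ᶠ t in 𝓝 x, ‖f t‖ = 1) : ⟪f x, f'⟫ = 0 := by
  have hconst : HasDerivAt (‖f ·‖ ^ 2) 0 x :=
    (hasDerivAt_const x (1 : ℝ)).congr_of_eventuallyEq
      (hnorm.mono fun t ht => by simp [ht])
  linarith [hf.norm_sq.unique hconst]

lemma MonotoneOn.abs_sub_le_of_mem_uIcc {f : ℝ → ℝ} {u v s : ℝ} (hf : MonotoneOn f (uIcc u v))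
    (hs : s ∈ uIcc u v) : |f s - f v| ≤ |f v - f u| :=
  abs_sub_le_of_uIcc_subset_uIcc <|
    uIcc_subset_uIcc (hf.mapsTo_uIcc right_mem_uIcc) (hf.mapsTo_uIcc hs)

lemma eventually_uIcc_subset {x : ℝ} {V : Set ℝ} (hV : V ∈ 𝓝 x) :
    ∀ᶠ y in 𝓝 x, uIcc x y ⊆ V := by
  obtain ⟨ε, hε, hball⟩ := Metric.mem_nhds_iff.1 hV
  filter_upwards [Metric.ball_mem_nhds x hε] with y hy
  exact ((convex_ball x ε).ordConnected.uIcc_subset (Metric.mem_ball_self hε) hy).trans hball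

lemma IsCompact.sInf_image_pos {K : Set ℝ} {g : ℝ → ℝ} (hK : IsCompact K) (hne : K.Nonempty)
    (hg : ContinuousOn g K) (hpos : ∀ s ∈ K, 0 < g s) : 0 < sInf (g '' K) := by
  obtain ⟨s, hs, hs_eq⟩ := (hK.image_of_continuousOn hg).sInf_mem (hne.image g)
  exact hs_eq ▸ hpos s hs

lemma norm_inv_smul_sub {𝕜 E : Type*} [NormedField 𝕜] [NormedAddCommGroup E] [NormedSpace 𝕜 E]
    {c : 𝕜} (hc : c ≠ 0) (x y : E) : ‖c⁻¹ • x - y‖ = ‖x - c • y‖ / ‖c‖ := by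
  rw [← inv_smul_smul₀ hc y, ← smul_sub, norm_smul, norm_inv, inv_smul_smul₀ hc, inv_mul_eq_div]

namespace PlaneCurve

def unitNormal (γ : ℝ → Plane) (s : ℝ) : Plane := Jrot (deriv γ s)

def curvature (γ : ℝ → Plane) (s : ℝ) : ℝ := ⟪deriv (deriv γ) s, unitNormal γ s⟫

def radiusOfCurvature (γ : ℝ → Plane) (s : ℝ) : ℝ := (curvature γ s)⁻¹

def evolute (γ : ℝ → Plane) (s : ℝ) : Plane :=
  γ s + radiusOfCurvature γ s • unitNormal γ s

variable {γ : ℝ → Plane} {U : Set ℝ} {s : ℝ}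

lemma hasDerivAt_deriv_of_contDiffOn (hU : IsOpen U) (hγ : ContDiffOn ℝ 2 γ U) (hs : s ∈ U) :
    HasDerivAt (deriv γ) (deriv (deriv γ) s) s :=
  (((hγ.deriv_of_isOpen hU (by norm_num : (1 : WithTop ℕ∞) + 1 ≤ 2)).differentiableOn
    one_ne_zero s hs).differentiableAt (hU.mem_nhds hs)).hasDerivAt

lemma continuousOn_curvature (hU : IsOpen U) (hγ : ContDiffOn ℝ 2 γ U) :
    ContinuousOn (curvature γ) U := by
  have hγ' := hγ.deriv_of_isOpen hU (by norm_num : (1 : WithTop ℕ∞) + 1 ≤ 2)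
  have hγ'' := hγ'.deriv_of_isOpen hU (by norm_num : (0 : WithTop ℕ∞) + 1 ≤ 1)
  exact hγ''.continuousOn.inner (jrotCLM.continuous.comp_continuousOn hγ'.continuousOn)

lemma deriv_deriv_eq_curvature_smul_unitNormal (hU : IsOpen U) (hγ : ContDiffOn ℝ 2 γ U)
    (harc : ∀ s ∈ U, ‖deriv γ s‖ = 1) (hs : s ∈ U) :
    deriv (deriv γ) s = curvature γ s • unitNormal γ s := by
  have horth : ⟪deriv (deriv γ) s, deriv γ s⟫ = 0 := by
    rw [real_inner_comm]
    exact (hasDerivAt_deriv_of_contDiffOn hU hγ hs).inner_eq_zero_of_norm_eventually_eq_one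
      (eventually_of_mem (hU.mem_nhds hs) harc)
  simpa [horth, curvature, unitNormal] using
    (inner_smul_add_inner_Jrot_smul (harc s hs) (deriv (deriv γ) s)).symm

lemma hasDerivAt_unitNormal (hU : IsOpen U) (hγ : ContDiffOn ℝ 2 γ U)
    (harc : ∀ s ∈ U, ‖deriv γ s‖ = 1) (hs : s ∈ U) :
    HasDerivAt (unitNormal γ) (-curvature γ s • deriv γ s) s := by
  have h : HasDerivAt (unitNormal γ) (jrotCLM (deriv (deriv γ) s)) s :=
    jrotCLM.hasFDerivAt.comp_hasDerivAt s (hasDerivAt_deriv_of_contDiffOn hU hγ hs)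
  rwa [deriv_deriv_eq_curvature_smul_unitNormal hU hγ harc hs, map_smul, jrotCLM_apply,
    unitNormal, Jrot_Jrot, smul_neg, ← neg_smul] at h

lemma norm_evolute_sub_sub_le (hU : IsOpen U) (hγ : ContDiffOn ℝ 2 γ U)
    (harc : ∀ s ∈ U, ‖deriv γ s‖ = 1) {u v m : ℝ} (huv : uIcc u v ⊆ U) (hm : 0 < m)
    (hRm : ∀ s ∈ uIcc u v, m ≤ |radiusOfCurvature γ s|)
    (hmono : MonotoneOn (radiusOfCurvature γ) (uIcc u v)) :
    ‖evolute γ v - evolute γ u -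
        (radiusOfCurvature γ v - radiusOfCurvature γ u) • unitNormal γ u‖ ≤
      |v - u| * |radiusOfCurvature γ v - radiusOfCurvature γ u| / m := by
  set R := radiusOfCurvature γ
  set κ := curvature γ
  have hderiv : ∀ s ∈ uIcc u v, HasDerivAt (fun t => γ t + R v • unitNormal γ t)
      ((1 - R v * κ s) • deriv γ s) s := by
    intro s hs
    have hγs := ((hγ.differentiableOn (by norm_num) s (huv hs)).differentiableAt
      (hU.mem_nhds (huv hs))).hasDerivAt
    refine (hγs.add ((hasDerivAt_unitNormal hU hγ harc (huv hs)).const_smul (R v))).congr_deriv ?_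
    module
  have hbound : ∀ s ∈ uIcc u v, ‖(1 - R v * κ s) • deriv γ s‖ ≤ |R v - R u| / m := by
    intro s hs
    have hRs : R s ≠ 0 := abs_pos.1 (hm.trans_le (hRm s hs))
    have hκs : κ s = (R s)⁻¹ := (inv_inv _).symm
    rw [norm_smul, harc s (huv hs), mul_one, Real.norm_eq_abs, hκs,
      show 1 - R v * (R s)⁻¹ = (R s - R v) / R s by field_simp, abs_div]
    exact div_le_div₀ (abs_nonneg _) (hmono.abs_sub_le_of_mem_uIcc hs) hm (hRm s hs)
  have hmvt := (convex_uIcc u v).norm_image_sub_le_of_norm_hasDerivWithin_le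
    (fun s hs => (hderiv s hs).hasDerivWithinAt) hbound left_mem_uIcc right_mem_uIcc
  calc ‖evolute γ v - evolute γ u - (R v - R u) • unitNormal γ u‖
      = ‖(γ v + R v • unitNormal γ v) - (γ u + R v • unitNormal γ u)‖ := by
        congr 1; simp only [evolute]; module
    _ ≤ |R v - R u| / m * ‖v - u‖ := hmvt
    _ = |v - u| * |R v - R u| / m := by rw [Real.norm_eq_abs]; ring

lemma norm_evolute_sub_sub_le_sInf (hU : IsOpen U) (hγ : ContDiffOn ℝ 2 γ U)
    (harc : ∀ s ∈ U, ‖deriv γ s‖ = 1) {u v : ℝ} (huv : u ≤ v) (hsub : Icc u v ⊆ U)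
    (hκ : ∀ s ∈ Icc u v, curvature γ s ≠ 0) (hmono : MonotoneOn (radiusOfCurvature γ) (Icc u v)) :
    ‖evolute γ v - evolute γ u -
        (radiusOfCurvature γ v - radiusOfCurvature γ u) • unitNormal γ u‖ ≤
      |v - u| * |radiusOfCurvature γ v - radiusOfCurvature γ u| /
        sInf ((fun s => |radiusOfCurvature γ s|) '' Icc u v) := by
  have hcont : ContinuousOn (fun s => |radiusOfCurvature γ s|) (Icc u v) :=
    ((continuousOn_curvature hU hγ).mono hsub |>.inv₀ hκ).abs
  rw [← uIcc_of_le huv] at hsub hκ hmono hcont ⊢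
  refine norm_evolute_sub_sub_le hU hγ harc hsub ?_ ?_ hmono
  · exact isCompact_uIcc.sInf_image_pos nonempty_uIcc hcont
      fun s hs => abs_pos.2 (inv_ne_zero (hκ s hs))
  · exact fun s hs =>
      csInf_le (isCompact_uIcc.image_of_continuousOn hcont).bddBelow (mem_image_of_mem _ hs)

lemma exists_pos_eventually_norm_inv_smul_evolute_sub_sub_le (hU : IsOpen U)
    (hγ : ContDiffOn ℝ 2 γ U) (harc : ∀ s ∈ U, ‖deriv γ s‖ = 1)
    (hκ : ∀ s ∈ U, curvature γ s ≠ 0) (hmono : StrictMonoOn (radiusOfCurvature γ) U)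
    {x : ℝ} (hx : x ∈ U) :
    ∃ C > 0, ∀ᶠ y in 𝓝[≠] x,
      ‖(radiusOfCurvature γ y - radiusOfCurvature γ x)⁻¹ • (evolute γ y - evolute γ x) -
        unitNormal γ x‖ ≤ C * |y - x| := by
  set R := radiusOfCurvature γ
  have hRx : 0 < |R x| := abs_pos.2 (inv_ne_zero (hκ x hx))
  set m := |R x| / 2
  have hm : 0 < m := half_pos hRx
  have hV : U ∩ {s | m < |R s|} ∈ 𝓝 x :=
    inter_mem (hU.mem_nhds hx) <| ((continuousOn_curvature hU hγ).inv₀ hκ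
      |>.continuousAt (hU.mem_nhds hx)).abs.eventually (lt_mem_nhds (half_lt_self hRx))
  refine ⟨m⁻¹, inv_pos.2 hm, ?_⟩
  filter_upwards [nhdsWithin_le_nhds (eventually_uIcc_subset hV), self_mem_nhdsWithin]
    with y hsub hyx
  have hyU : y ∈ U := (hsub right_mem_uIcc).1
  have hΔ : R y - R x ≠ 0 := sub_ne_zero.2 (hmono.injOn.ne hyU hx hyx)
  have hest := norm_evolute_sub_sub_le hU hγ harc (hsub.trans inter_subset_left) hm
    (fun s hs => (hsub hs).2.le) (hmono.monotoneOn.mono (hsub.trans inter_subset_left))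
  rw [norm_inv_smul_sub hΔ, Real.norm_eq_abs, div_le_iff₀ (abs_pos.2 hΔ)]
  calc _ ≤ |y - x| * |R y - R x| / m := hest
    _ = m⁻¹ * |y - x| * |R y - R x| := by ring

end PlaneCurve

theorem evolute_difference_estimate_general
    (a b : ℝ) (γ ν ev : ℝ → Plane) (κ R : ℝ → ℝ)
    (hγ : ContDiffOn ℝ 2 γ (Ioo a b))
    (harc : ∀ s ∈ Ioo a b, ‖deriv γ s‖ = 1)
    (hν : ∀ s, ν s = Jrot (deriv γ s))
    (hκdef : ∀ s, κ s = ⟪deriv (deriv γ) s, ν s⟫)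
    (hκ : ∀ s ∈ Ioo a b, κ s ≠ 0)
    (hR : ∀ s, R s = (κ s)⁻¹)
    (hev : ∀ s, ev s = γ s + R s • ν s)
    (hmono : StrictMonoOn R (Ioo a b)) :
    (∀ s₁ ∈ Ioo a b, ∀ s₂ ∈ Ioo a b, s₁ < s₂ →
      ‖ev s₂ - ev s₁ - (R s₂ - R s₁) • ν s₁‖ ≤
        |s₂ - s₁| * |R s₂ - R s₁| / sInf ((fun s => |R s|) '' Icc s₁ s₂)) ∧
    (∀ s₁ ∈ Ioo a b, ∃ C > 0, ∀ᶠ s₂ in 𝓝[≠] s₁, s₂ ∈ Ioo a b →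
      ‖(R s₂ - R s₁)⁻¹ • (ev s₂ - ev s₁) - ν s₁‖ ≤ C * |s₂ - s₁|) := by
  obtain rfl : ν = PlaneCurve.unitNormal γ := funext hν
  obtain rfl : κ = PlaneCurve.curvature γ := funext hκdef
  obtain rfl : R = PlaneCurve.radiusOfCurvature γ := funext hR
  obtain rfl : ev = PlaneCurve.evolute γ := funext hev
  refine ⟨fun s₁ hs₁ s₂ hs₂ h12 => ?_, fun s₁ hs₁ => ?_⟩
  · have hsub : Icc s₁ s₂ ⊆ Ioo a b := Icc_subset_Ioo hs₁.1 hs₂.2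
    exact PlaneCurve.norm_evolute_sub_sub_le_sInf isOpen_Ioo hγ harc h12.le hsub
      (fun s hs => hκ s (hsub hs)) (hmono.monotoneOn.mono hsub)
  · obtain ⟨C, hC, hbound⟩ := PlaneCurve.exists_pos_eventually_norm_inv_smul_evolute_sub_sub_le
      isOpen_Ioo hγ harc hκ hmono hs₁
    exact ⟨C, hC, hbound.mono fun _ h _ => h⟩

/-- quantitative tangency estimate for the evolute when `R` is
strictly increasing. -/
theorem evolute_difference_estimate
    (a b : ℝ) (hab : a < b) (γ ν ev : ℝ → Plane) (κ R : ℝ → ℝ)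
    (hγ : ContDiffOn ℝ 2 γ (Ioo a b))
    (harc : ∀ s ∈ Ioo a b, ‖deriv γ s‖ = 1)
    (hν : ∀ s, ν s = Jrot (deriv γ s))
    (hκdef : ∀ s, κ s = ⟪deriv (deriv γ) s, ν s⟫)
    (hκ : ∀ s ∈ Ioo a b, κ s ≠ 0)
    (hR : ∀ s, R s = (κ s)⁻¹)
    (hev : ∀ s, ev s = γ s + R s • ν s)
    (hmono : StrictMonoOn R (Ioo a b)) :
    (∀ s₁ ∈ Ioo a b, ∀ s₂ ∈ Ioo a b, s₁ < s₂ →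
      ‖ev s₂ - ev s₁ - (R s₂ - R s₁) • ν s₁‖ ≤
        |s₂ - s₁| * |R s₂ - R s₁| / sInf ((fun s => |R s|) '' Icc s₁ s₂)) ∧
    (∀ s₁ ∈ Ioo a b, ∃ C > 0, ∀ᶠ s₂ in 𝓝[≠] s₁, s₂ ∈ Ioo a b →
      ‖(R s₂ - R s₁)⁻¹ • (ev s₂ - ev s₁) - ν s₁‖ ≤ C * |s₂ - s₁|) :=
  evolute_difference_estimate_general a b γ ν ev κ R hγ harc hν hκdef hκ hR hev hmono
end
end

section
/- Let f be m times continuously differentiable on an open interval I, let s₁ ∈ I, suppose f^{(j)}(s₁) = 0 for 1 ≤ j ≤ m−1 and f^{(m)}(t) ≥ c > 0 for all t ∈ I. Then: (1) for every 0 ≤ j ≤ m−1 and every s ∈ I with s ≥ s₁, f^{(m−j)}(s) ≥ (c/j!)·(s − s₁)^j ≥ 0; and (2) for all s, s′ ∈ I with s₁ ≤ s < s′, f(s′) − f(s) ≥ c·(s′ − s)^m / m!. -/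
/-!
Everything follows from one comparison principle: if `F' ≤ G'` on `[a, b]`, then
`F b - F a ≤ G b - G a`. Taking `F t = c (t - s₁)^(j+1) / (j+1)!` and `G = f^(m-j-1)`, which
both vanish at `s₁`, turns the bound on `f^(m-j)` into the bound on `f^(m-j-1)`, so the
derivative bounds follow by induction on `j`. The increment bound is the same comparison on
`[s, s']` against `c (t - s)^m / m!`, using the `j = m - 1` bound on `f'` and
`(t - s)^(m-1) ≤ (t - s₁)^(m-1)`.
-/

open Set

theorem ContDiffOn.hasDerivAt_iteratedDeriv {𝕜 F : Type*} [NontriviallyNormedField 𝕜]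
    [NormedAddCommGroup F] [NormedSpace 𝕜 F] {f : 𝕜 → F} {s : Set 𝕜} {n : WithTop ℕ∞}
    {k : ℕ} (hf : ContDiffOn 𝕜 n f s) (hs : IsOpen s) (hk : k < n) {x : 𝕜} (hx : x ∈ s) :
    HasDerivAt (iteratedDeriv k f) (iteratedDeriv (k + 1) f x) x := by
  have hdiff : DifferentiableOn 𝕜 (iteratedDeriv k f) s :=
    (hf.differentiableOn_iteratedDerivWithin hk hs.uniqueDiffOn).congr
      fun y hy => (iteratedDerivWithin_of_isOpen hs hy).symm
  rw [iteratedDeriv_succ]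
  exact ((hdiff x hx).differentiableAt (hs.mem_nhds hx)).hasDerivAt

theorem sub_le_sub_of_hasDerivAt_le {F G F' G' : ℝ → ℝ} {a b : ℝ} (hab : a ≤ b)
    (hF : ∀ x ∈ Icc a b, HasDerivAt F (F' x) x) (hG : ∀ x ∈ Icc a b, HasDerivAt G (G' x) x)
    (h : ∀ x ∈ Ico a b, F' x ≤ G' x) : F b - F a ≤ G b - G a := by
  have hle := image_le_of_deriv_right_le_deriv_boundary (f := F) (B := fun x => G x - G a + F a)
    (fun x hx => (hF x hx).continuousAt.continuousWithinAt)
    (fun x hx => (hF x (Ico_subset_Icc_self hx)).hasDerivWithinAt) (by simp)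
    (fun x hx => ((hG x hx).sub_const _ |>.add_const _).continuousAt.continuousWithinAt)
    (fun x hx => ((hG x (Ico_subset_Icc_self hx)).sub_const _ |>.add_const _).hasDerivWithinAt)
    h (right_mem_Icc.2 hab)
  linarith

theorem hasDerivAt_div_factorial_mul_sub_pow (c a x : ℝ) (j : ℕ) :
    HasDerivAt (fun t => c / (j + 1).factorial * (t - a) ^ (j + 1))
      (c / j.factorial * (x - a) ^ j) x := by
  have h := (((hasDerivAt_id' x).sub_const a).fun_pow (j + 1)).const_mul (c / (j + 1).factorial)
  refine h.congr_deriv ?_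
  push_cast [Nat.factorial_succ, Nat.add_sub_cancel]
  field_simp

theorem div_factorial_mul_sub_pow_le_iteratedDeriv {I : Set ℝ} (hIopen : IsOpen I)
    (hIconn : I.OrdConnected) {f : ℝ → ℝ} {m : ℕ} {c s₁ : ℝ} (hs₁ : s₁ ∈ I)
    (hf : ContDiffOn ℝ m f I) (hvanish : ∀ j, 1 ≤ j → j < m → iteratedDeriv j f s₁ = 0)
    (hlower : ∀ t ∈ I, c ≤ iteratedDeriv m f t) {j : ℕ} (hj : j < m) {s : ℝ} (hs : s ∈ I)
    (hs₁s : s₁ ≤ s) : c / j.factorial * (s - s₁) ^ j ≤ iteratedDeriv (m - j) f s := by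
  induction j generalizing s with
  | zero => simpa using hlower s hs
  | succ j ih =>
    have hIcc : Icc s₁ s ⊆ I := hIconn.out hs₁ hs
    have hincr := sub_le_sub_of_hasDerivAt_le (G' := iteratedDeriv (m - j) f) hs₁s
      (fun x _ => hasDerivAt_div_factorial_mul_sub_pow c s₁ x j)
      (fun x hx => by
        rw [show m - j = m - (j + 1) + 1 by omega]
        exact hf.hasDerivAt_iteratedDeriv hIopen (by exact_mod_cast (by omega : m - (j + 1) < m))
          (hIcc hx))
      (fun x hx => ih (by omega) (hIcc (Ico_subset_Icc_self hx)) hx.1)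
    simpa [hvanish (m - (j + 1)) (by omega) (by omega)] using hincr

theorem div_factorial_mul_pow_le_sub_of_le_deriv {f f' : ℝ → ℝ} {k : ℕ} {c a s s' : ℝ}
    (hc : 0 ≤ c) (has : a ≤ s) (hss' : s ≤ s') (hf : ∀ t ∈ Icc s s', HasDerivAt f (f' t) t)
    (hf' : ∀ t ∈ Ico s s', c / k.factorial * (t - a) ^ k ≤ f' t) :
    c / (k + 1).factorial * (s' - s) ^ (k + 1) ≤ f s' - f s := by
  have hincr := sub_le_sub_of_hasDerivAt_le hss'
    (fun t _ => hasDerivAt_div_factorial_mul_sub_pow c s t k) hf fun t ht =>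
      (mul_le_mul_of_nonneg_left (pow_le_pow_left₀ (by linarith [ht.1]) (by linarith) k)
        (by positivity)).trans (hf' t ht)
  simpa using hincr

/-- lower bounds for the derivatives and increments of a function
whose intermediate derivatives vanish at `s₁` and whose `m`-th derivative is
bounded below by `c > 0` on an open interval. -/
theorem deriv_and_increment_lower_bounds
    (I : Set ℝ) (hIopen : IsOpen I) (hIconn : I.OrdConnected)
    (f : ℝ → ℝ) (m : ℕ) (hm : 1 ≤ m) (c : ℝ) (hc : 0 < c)
    (s₁ : ℝ) (hs₁ : s₁ ∈ I)
    (hf : ContDiffOn ℝ m f I)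
    (hvanish : ∀ j : ℕ, 1 ≤ j → j ≤ m - 1 → iteratedDeriv j f s₁ = 0)
    (hlower : ∀ t ∈ I, c ≤ iteratedDeriv m f t) :
    (∀ j : ℕ, j ≤ m - 1 → ∀ s ∈ I, s₁ ≤ s →
      0 ≤ c / (Nat.factorial j) * (s - s₁) ^ j ∧
      c / (Nat.factorial j) * (s - s₁) ^ j ≤ iteratedDeriv (m - j) f s) ∧
    (∀ s ∈ I, ∀ s' ∈ I, s₁ ≤ s → s < s' →
      c * (s' - s) ^ m / (Nat.factorial m) ≤ f s' - f s) := by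
  have hbound : ∀ j, j ≤ m - 1 → ∀ s ∈ I, s₁ ≤ s →
      c / j.factorial * (s - s₁) ^ j ≤ iteratedDeriv (m - j) f s :=
    fun j hj s hs hs₁s => div_factorial_mul_sub_pow_le_iteratedDeriv hIopen hIconn hs₁ hf
      (fun j h₁ h₂ => hvanish j h₁ (by omega)) hlower (by omega) hs hs₁s
  refine ⟨fun j hj s hs hs₁s => ⟨?_, hbound j hj s hs hs₁s⟩, ?_⟩
  · have : 0 ≤ s - s₁ := by linarith
    positivity
  intro s hs s' hs' hs₁s hss'
  obtain ⟨k, rfl⟩ : ∃ k, m = k + 1 := ⟨m - 1, by omega⟩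
  have hIcc : Icc s s' ⊆ I := hIconn.out hs hs'
  have hincr := div_factorial_mul_pow_le_sub_of_le_deriv (f' := iteratedDeriv 1 f) hc.le hs₁s
    hss'.le
    (fun t ht => by
      simpa only [iteratedDeriv_zero] using
        hf.hasDerivAt_iteratedDeriv hIopen (k := 0) (by exact_mod_cast hm) (hIcc ht))
    (fun t ht => by
      simpa using hbound k (by omega) t (hIcc (Ico_subset_Icc_self ht)) (hs₁s.trans ht.1))
  rwa [mul_div_right_comm]
end

section
/- The involute of a smooth curve, when it is a regular curve, has no double point: let β : (a,b) → ℝ² be infinitely differentiable and parametrized by arclength with nonvanishing curvature, let c ∈ ℝ, and define the involute γ(s) := β(s) + (c − s)·β'(s). If γ'(s) ≠ 0 for all s ∈ (a,b) (equivalently, (c − s)β''(s) ≠ 0 for all s), then γ is injective. -/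
open Set Real Topology Filter
open scoped NNReal

noncomputable section

local notation "⟪" x ", " y "⟫" => @inner ℝ _ _ x y

/-! If `γ(s₁) = γ(s₂) = P` with `s₁ < s₂`, then `‖P - β(s)‖ = |c - s|` at both ends, where `c` lies
outside `(s₁, s₂)` because `γ'(c) = 0`. As `β` is `1`-Lipschitz, the triangle inequality forces
`‖P - β(s)‖ = |c - s|` on all of `[s₁, s₂]`. Differentiating the squares gives
`⟪P - β(s), β'(s)⟫ = c - s`, the equality case of Cauchy–Schwarz, so `P = γ(s)` throughout and `γ'`
vanishes on `(s₁, s₂)`. -/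

section

variable {E : Type*} [NormedAddCommGroup E] [NormedSpace ℝ E]

def involute (β : ℝ → E) (c s : ℝ) : E := β s + (c - s) • deriv β s

theorem hasDerivAt_involute {β : ℝ → E} {β'' : E} {c s : ℝ} (hβ : DifferentiableAt ℝ β s)
    (hβ' : HasDerivAt (deriv β) β'' s) : HasDerivAt (involute β c) ((c - s) • β'') s := by
  have h : HasDerivAt (involute β c) (deriv β s + ((c - s) • β'' + (-1 : ℝ) • deriv β s)) s :=
    hβ.hasDerivAt.add (((hasDerivAt_id' s).const_sub c).smul hβ')
  convert h using 1
  rw [neg_one_smul]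
  abel

end

theorem dist_eq_abs_sub_of_lipschitzOnWith {X : Type*} [PseudoMetricSpace X] {β : ℝ → X}
    {P : X} {c s₁ s₂ : ℝ} (hβ : LipschitzOnWith 1 β (Icc s₁ s₂)) (hc : c ∉ Ioo s₁ s₂)
    (h₁ : dist P (β s₁) = |c - s₁|) (h₂ : dist P (β s₂) = |c - s₂|) :
    ∀ s ∈ Icc s₁ s₂, dist P (β s) = |c - s| := by
  intro s hs
  have hle : ∀ x ∈ Icc s₁ s₂, ∀ y ∈ Icc s₁ s₂, x ≤ y → dist (β x) (β y) ≤ y - x := by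
    intro x hx y hy hxy
    simpa [Real.dist_eq, abs_sub_comm x, abs_of_nonneg (sub_nonneg.2 hxy)] using
      hβ.dist_le_mul x hx y hy
  have d₁ := hle s₁ (left_mem_Icc.2 (hs.1.trans hs.2)) s hs hs.1
  have d₂ := hle s hs s₂ (right_mem_Icc.2 (hs.1.trans hs.2)) hs.2
  have t₁ := dist_triangle P (β s₁) (β s)
  have t₂ := dist_triangle P (β s) (β s₂)
  have t₃ := dist_triangle P (β s₂) (β s)
  have t₄ := dist_triangle P (β s) (β s₁)
  rw [dist_comm (β s₂)] at t₃
  rw [dist_comm (β s)] at t₄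
  rcases le_or_gt c s₁ with hc₁ | hc₁
  · rw [abs_of_nonpos (by linarith)] at h₁ h₂ ⊢
    linarith
  · have hc₂ : s₂ ≤ c := not_lt.1 fun h => hc ⟨hc₁, h⟩
    rw [abs_of_nonneg (by linarith)] at h₁ h₂ ⊢
    linarith

section

variable {E : Type*} [NormedAddCommGroup E] [InnerProductSpace ℝ E]

theorem eq_add_smul_of_dist_eq_abs_sub {β : ℝ → E} {v P : E} {c s : ℝ}
    (hβ : HasDerivAt β v s) (hv : ‖v‖ = 1) (hdist : ∀ᶠ u in 𝓝 s, dist P (β u) = |c - u|) :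
    P = β s + (c - s) • v := by
  have hsq : (‖P - β ·‖ ^ 2) =ᶠ[𝓝 s] fun u => (c - u) ^ 2 := by
    filter_upwards [hdist] with u hu
    rw [← dist_eq_norm, hu, sq_abs]
  have hinner : inner ℝ (P - β s) v = c - s := by
    have h := (((hasDerivAt_const s P).sub hβ).norm_sq).unique
      ((((hasDerivAt_id s).const_sub c).pow 2).congr_of_eventuallyEq hsq)
    simp only [Pi.sub_apply, zero_sub, inner_neg_right] at h
    norm_num at h
    linarith
  have hnorm : ‖P - β s‖ = |c - s| := by rw [← dist_eq_norm, hdist.self_of_nhds]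
  have hzero : ‖P - β s - (c - s) • v‖ ^ 2 = 0 := by
    rw [norm_sub_sq_real, hnorm, norm_smul, hv, real_inner_smul_right, hinner, Real.norm_eq_abs,
      mul_one, sq_abs]
    ring
  rw [← sub_eq_zero, ← sub_sub]
  simpa using hzero

theorem involute_eqOn_of_involute_eq {β : ℝ → E} {c s₁ s₂ : ℝ}
    (hβ : ∀ s ∈ Icc s₁ s₂, DifferentiableAt ℝ β s) (harc : ∀ s ∈ Icc s₁ s₂, ‖deriv β s‖ = 1)
    (hc : c ∉ Ioo s₁ s₂) (heq : involute β c s₁ = involute β c s₂) :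
    EqOn (involute β c) (fun _ => involute β c s₁) (Ioo s₁ s₂) := by
  intro s hs
  have h₁₂ : s₁ ≤ s₂ := hs.1.le.trans hs.2.le
  have hlip : LipschitzOnWith 1 β (Icc s₁ s₂) :=
    (convex_Icc s₁ s₂).lipschitzOnWith_of_nnnorm_deriv_le hβ
      fun u hu => by rw [← NNReal.coe_le_coe, coe_nnnorm, harc u hu, NNReal.coe_one]
  have hend : ∀ u ∈ Icc s₁ s₂, dist (involute β c u) (β u) = |c - u| := fun u hu => by
    rw [dist_eq_norm, involute, add_sub_cancel_left, norm_smul, harc u hu, mul_one,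
      Real.norm_eq_abs]
  have hdist := dist_eq_abs_sub_of_lipschitzOnWith hlip hc
    (hend s₁ (left_mem_Icc.2 h₁₂)) (heq ▸ hend s₂ (right_mem_Icc.2 h₁₂))
  exact (eq_add_smul_of_dist_eq_abs_sub (hβ s (Ioo_subset_Icc_self hs)).hasDerivAt
    (harc s (Ioo_subset_Icc_self hs)) (eventually_of_mem (Icc_mem_nhds hs.1 hs.2) hdist)).symm

end

theorem involute_injective_general
    (a b c : ℝ) (β : ℝ → Plane)
    (hβ : ContDiffOn ℝ (⊤ : ℕ∞) β (Ioo a b))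
    (harc : ∀ s ∈ Ioo a b, ‖deriv β s‖ = 1)
    (hreg : ∀ s ∈ Ioo a b, deriv (fun u => β u + (c - u) • deriv β u) s ≠ 0) :
    InjOn (fun s => β s + (c - s) • deriv β s) (Ioo a b) := by
  change InjOn (involute β c) _
  change ∀ s ∈ Ioo a b, deriv (involute β c) s ≠ 0 at hreg
  have hβ' : ContDiffOn ℝ 1 (deriv β) (Ioo a b) :=
    hβ.deriv_of_isOpen isOpen_Ioo (WithTop.coe_le_coe.2 le_top)
  have hβ₁ : ∀ s ∈ Ioo a b, DifferentiableAt ℝ β s := fun s hs =>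
    (hβ.differentiableOn (by simp)).differentiableAt (isOpen_Ioo.mem_nhds hs)
  have hβ₂ : ∀ s ∈ Ioo a b, DifferentiableAt ℝ (deriv β) s := fun s hs =>
    (hβ'.differentiableOn one_ne_zero).differentiableAt (isOpen_Ioo.mem_nhds hs)
  have hc : c ∉ Ioo a b := fun hc => hreg c hc <| by
    simpa using (hasDerivAt_involute (c := c) (hβ₁ c hc) (hβ₂ c hc).hasDerivAt).deriv
  intro s₁ h₁ s₂ h₂ heq
  by_contra hne
  wlog h₁₂ : s₁ < s₂ generalizing s₁ s₂
  · exact this h₂ h₁ heq.symm (Ne.symm hne) ((not_lt.1 h₁₂).lt_of_ne' hne)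
  have hsub : Icc s₁ s₂ ⊆ Ioo a b := Icc_subset_Ioo h₁.1 h₂.2
  have hconst := involute_eqOn_of_involute_eq (fun s hs => hβ₁ s (hsub hs))
    (fun s hs => harc s (hsub hs)) (fun hc' => hc (Ioo_subset_Ioo h₁.1.le h₂.2.le hc')) heq
  have hmid : (s₁ + s₂) / 2 ∈ Ioo s₁ s₂ := ⟨by linarith, by linarith⟩
  refine hreg _ (hsub (Ioo_subset_Icc_self hmid)) ?_
  rw [(hconst.eventuallyEq_of_mem (isOpen_Ioo.mem_nhds hmid)).deriv_eq, deriv_const]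

/-- the involute `γ s = β s + (c - s) • β' s` of a smooth
arclength-parametrized curve `β` with nonvanishing curvature is injective
whenever it is regular. -/
theorem involute_injective
    (a b c : ℝ) (hab : a < b) (β : ℝ → Plane)
    (hβ : ContDiffOn ℝ (⊤ : ℕ∞) β (Ioo a b))
    (harc : ∀ s ∈ Ioo a b, ‖deriv β s‖ = 1)
    (hκ : ∀ s ∈ Ioo a b, ⟪deriv (deriv β) s, Jrot (deriv β s)⟫ ≠ (0 : ℝ))
    (hreg : ∀ s ∈ Ioo a b, deriv (fun u => β u + (c - u) • deriv β u) s ≠ 0) :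
    InjOn (fun s => β s + (c - s) • deriv β s) (Ioo a b) :=
  involute_injective_general a b c β hβ harc hreg
end
end
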